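/- The k-th entry of the delta sequence of the m-ary reflected Gray code (the position of the digit changed at the k-th transition, positions numbered from 1) equals ρ(k)+1, where ρ(k) is the largest i with m^i dividing k. -/

import Mathlib

/-- The `m`-ary reflected Gray code on `n`-tuples over `{0, …, m-1}`, with the
least significant digit `a₁` last in the list.  For `n = 0` it is the single
empty tuple; each codeword `Cᵢ` of the code for length `n` (1-indexed `i`) is
extended by the digits `0, …, m-1` in increasing order if `i` is odd and in
decreasing order if `i` is even. -/
def mGray (m : ℕ) : ℕ → List (List ℕ)
  | 0 => [[]]
  | n + 1 =>
      ((mGray m n).zipIdx.map (fun p =>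
        (if p.2 % 2 = 0 then List.range m else (List.range m).reverse).map
          (fun d => p.1 ++ [d]))).flatten

/-- `rho m n k` is the largest `i ≤ n` such that `m^i` divides `k`. -/
def rho (m n k : ℕ) : ℕ := Nat.findGreatest (fun i => m ^ i ∣ k) n

/-!
At position `e` from the right, word `i` of the code carries the digit `q % m` of `q = i / m ^ e`,
reflected to `m - 1 - q % m` when `q / m` is odd. Going from word `i` to word `i + 1` changes `q`
only at the positions `e` with `m ^ e ∣ i + 1`, where it grows by one. That changes the digit
unless `q + 1` starts a new block of `m`, and there the reflection of the next block exactly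
cancels the wrap-around from `m - 1` to `0`.
-/

theorem List.flatten_map_range_map_range (L m : ℕ) (g : ℕ → ℕ → List ℕ) :
    ((List.range L).map (fun i => (List.range m).map (g i))).flatten
      = (List.range (L * m)).map (fun j => g (j / m) (j % m)) := by
  induction L with
  | zero => simp
  | succ L ih =>
    rw [List.range_succ, Nat.succ_mul, List.range_add, List.map_append, List.flatten_append, ih,
      List.map_append]
    congr 1
    simp only [List.map_cons, List.map_nil, List.flatten_cons, List.flatten_nil, List.append_nil,
      List.map_map, List.map_inj_left, Function.comp_apply]
    intro a ha
    rw [List.mem_range] at ha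
    rw [Nat.mul_comm L m, Nat.mul_add_div (by omega), Nat.div_eq_of_lt ha,
      Nat.mul_add_mod, Nat.mod_eq_of_lt ha, Nat.add_zero]

/-- The digit `q % m` of block `q / m`, where even blocks count up and odd blocks count down. -/
def reflectedDigit (m q : ℕ) : ℕ :=
  if q / m % 2 = 0 then q % m else m - 1 - q % m

def grayWord (m : ℕ) : ℕ → ℕ → List ℕ
  | 0, _ => []
  | n + 1, i => grayWord m n (i / m) ++ [reflectedDigit m i]

theorem grayWord_length (m n i : ℕ) : (grayWord m n i).length = n := by
  induction n generalizing i with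
  | zero => rfl
  | succ n ih => simp [grayWord, ih]

theorem mGray_eq_map_grayWord (m n : ℕ) :
    mGray m n = (List.range (m ^ n)).map (grayWord m n) := by
  induction n with
  | zero => rfl
  | succ n ih =>
    have hzipIdx : ((List.range (m ^ n)).map (grayWord m n)).zipIdx
        = (List.range (m ^ n)).map (fun i => (grayWord m n i, i)) := by
      apply List.ext_getElem <;> simp [List.getElem_zipIdx]
    have hreverse : (List.range m).reverse = (List.range m).map (fun d => m - 1 - d) := by
      apply List.ext_getElem <;> simp [Nat.sub_sub]
    have hblock (i : ℕ) :
        (if i % 2 = 0 then List.range m else (List.range m).reverse).map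
          (fun d => grayWord m n i ++ [d])
        = (List.range m).map (fun d => grayWord m n i ++ [if i % 2 = 0 then d else m - 1 - d]) := by
      split_ifs <;> simp [hreverse]
    rw [mGray, ih, hzipIdx, List.map_map]
    simp only [Function.comp_def, hblock]
    rw [List.flatten_map_range_map_range, ← pow_succ]
    rfl

theorem mGray_getD_of_lt {m n i : ℕ} (hi : i < m ^ n) :
    (mGray m n).getD i [] = grayWord m n i := by
  rw [mGray_eq_map_grayWord, List.getD_eq_getElem _ _ (by simpa using hi), List.getElem_map,
    List.getElem_range]

theorem grayWord_getD (m n i e : ℕ) (he : e < n) :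
    (grayWord m n i).getD (n - 1 - e) 0 = reflectedDigit m (i / m ^ e) := by
  induction n generalizing i e with
  | zero => omega
  | succ n ih =>
    rw [grayWord]
    rcases e with _ | e
    · rw [List.getD_append_right _ _ _ _ (by simp [grayWord_length]), grayWord_length]
      simp
    · rw [show n + 1 - 1 - (e + 1) = n - 1 - e by omega,
        List.getD_append _ _ _ _ (by rw [grayWord_length]; omega), ih _ _ (by omega),
        Nat.div_div_eq_div_mul, ← pow_succ']

theorem reflectedDigit_ne_succ_iff {m : ℕ} (hm : 0 < m) (q : ℕ) :
    reflectedDigit m q ≠ reflectedDigit m (q + 1) ↔ ¬ m ∣ q + 1 := by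
  have hq := Nat.mod_add_div q m
  have hq' := Nat.mod_add_div (q + 1) m
  have hlt := Nat.mod_lt (q + 1) hm
  unfold reflectedDigit
  by_cases h : m ∣ q + 1
  · rw [Nat.succ_div_of_dvd h, Nat.mul_add] at hq'
    have hzero := Nat.mod_eq_zero_of_dvd h
    rw [Nat.succ_div_of_dvd h]
    split_ifs <;> omega
  · rw [Nat.succ_div_of_not_dvd h] at hq' ⊢
    split_ifs <;> omega

theorem reflectedDigit_div_pow_ne_succ_iff {m : ℕ} (hm : 0 < m) (i e : ℕ) :
    reflectedDigit m (i / m ^ e) ≠ reflectedDigit m ((i + 1) / m ^ e) ↔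
      m ^ e ∣ i + 1 ∧ ¬ m ^ (e + 1) ∣ i + 1 := by
  by_cases h : m ^ e ∣ i + 1
  · rw [Nat.succ_div_of_dvd h, reflectedDigit_ne_succ_iff hm, ← Nat.succ_div_of_dvd h,
      Nat.dvd_div_iff_mul_dvd h, ← pow_succ]
    exact (and_iff_right h).symm
  · rw [Nat.succ_div_of_not_dvd h]
    simp [h]

theorem rho_eq_iff {m n k e : ℕ} (he : e < n) :
    rho m n k = e ↔ m ^ e ∣ k ∧ ¬ m ^ (e + 1) ∣ k := by
  rw [rho, Nat.findGreatest_eq_iff]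
  constructor
  · rintro ⟨-, hdvd, hgt⟩
    exact ⟨by rcases e with _ | e <;> simp_all, hgt (by omega) he⟩
  · rintro ⟨hdvd, hndvd⟩
    exact ⟨he.le, fun _ => hdvd, fun d hd _ hdk =>
      hndvd ((pow_dvd_pow m hd).trans hdk)⟩

/-- The `k`-th entry of the delta sequence of the `m`-ary reflected Gray code,
i.e. the position (1-indexed from the right) of the digit changed between the
`k`-th and `(k+1)`-st tuples, equals `ρ(k) + 1`: the digit at position `j`
from the right (list index `n - j`) changes if and only if `j = ρ(k) + 1`. -/
theorem mGray_delta (m n k : ℕ) (hk1 : 1 ≤ k) (hk2 : k < m ^ n) :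
    ∀ j, 1 ≤ j → j ≤ n →
      (((mGray m n).getD (k - 1) []).getD (n - j) 0 ≠
          ((mGray m n).getD k []).getD (n - j) 0 ↔ j = rho m n k + 1) := by
  intro j hj1 hjn
  obtain ⟨i, rfl⟩ : ∃ i, k = i + 1 := ⟨k - 1, by omega⟩
  have hm : 0 < m := Nat.pos_of_ne_zero fun h => by
    subst h; rcases n with _ | n <;> simp at hk2
  obtain ⟨e, rfl⟩ : ∃ e, j = e + 1 := ⟨j - 1, by omega⟩
  rw [show n - (e + 1) = n - 1 - e by omega, Nat.add_sub_cancel, mGray_getD_of_lt (by omega),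
    mGray_getD_of_lt hk2, grayWord_getD _ _ _ _ (by omega), grayWord_getD _ _ _ _ (by omega),
    reflectedDigit_div_pow_ne_succ_iff hm, Nat.add_right_cancel_iff, eq_comm,
    rho_eq_iff (by omega)]
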